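/- arXiv:1301.2396 — 4 statements merged into one kernel-verified Lean document; each statement's English description precedes it below -/
import Mathlib

section
/- Suppose the moments satisfy μ_k(z) = δ_z^k(μ_0)(z) for every k ≥ 0, where δ_z = z·d/dz and μ_0 is smooth on (0,∞), and suppose Δ_n(z) ≠ 0 for all n ≥ 0 on an open interval of (0,∞). Then on that interval the recurrence coefficients satisfy the Toda system: δ_z(a_n²) = a_n²(b_n − b_{n−1}) for n ≥ 1, and δ_z(b_n) = a_{n+1}² − a_n² for n ≥ 0. -/
/-- The Euler operator `δ_z = z · d/dz` acting on functions `ℝ → ℝ`. -/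
noncomputable def eulerOp (f : ℝ → ℝ) : ℝ → ℝ := fun z => z * deriv f z

/-- The `n × n` Wronskian-type determinant `W_n(ψ)(z) = det[δ_z^{i+j}(ψ)(z)]_{i,j=0}^{n-1}`,
with `W_0 = 1`. -/
noncomputable def Wdet (n : ℕ) (ψ : ℝ → ℝ) (z : ℝ) : ℝ :=
  Matrix.det (Matrix.of fun i j : Fin n => eulerOp^[(i : ℕ) + (j : ℕ)] ψ z)

/-- The Hankel determinant `Δ_n(z) = det[μ_{i+j}(z)]_{i,j=0}^{n-1}`, with `Δ_0 = 1`. -/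
noncomputable def hankel (μ : ℕ → ℝ → ℝ) (n : ℕ) (z : ℝ) : ℝ :=
  Matrix.det (Matrix.of fun i j : Fin n => μ ((i : ℕ) + (j : ℕ)) z)

/-- The shifted Hankel determinant `Δ̃_n(z)`: the determinant of `[μ_{i+j}(z)]_{i,j=0}^{n-1}`
with its last column `(μ_{i+n-1})_i` replaced by `(μ_{i+n})_i`, and `Δ̃_0 = 0`. -/
noncomputable def hankelShift (μ : ℕ → ℝ → ℝ) : ℕ → ℝ → ℝ
  | 0, _ => 0
  | (m + 1), z => Matrix.det (Matrix.of fun i j : Fin (m + 1) =>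
      if (j : ℕ) = m then μ ((i : ℕ) + m + 1) z else μ ((i : ℕ) + (j : ℕ)) z)

/-- The recurrence coefficient `a_n²(z) = Δ_{n+1}(z) Δ_{n-1}(z) / Δ_n(z)²`, with
`a_0² = 0` (since `Δ_{-1} = 0`). -/
noncomputable def aSq (μ : ℕ → ℝ → ℝ) : ℕ → ℝ → ℝ
  | 0, _ => 0
  | (m + 1), z => hankel μ (m + 2) z * hankel μ m z / (hankel μ (m + 1) z) ^ 2

/-- The recurrence coefficient `b_n(z) = Δ̃_{n+1}(z)/Δ_{n+1}(z) − Δ̃_n(z)/Δ_n(z)`. -/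
noncomputable def bCoef (μ : ℕ → ℝ → ℝ) (n : ℕ) (z : ℝ) : ℝ :=
  hankelShift μ (n + 1) z / hankel μ (n + 1) z - hankelShift μ n z / hankel μ n z

/-! ### Auxiliary material -/

open Matrix

/-- Derivative of a determinant whose entries depend on a real parameter. -/
lemma hasDerivAt_det {n : ℕ} {A : ℝ → Matrix (Fin n) (Fin n) ℝ}
    {A' : Matrix (Fin n) (Fin n) ℝ} {z : ℝ}
    (h : ∀ i j, HasDerivAt (fun t => A t i j) (A' i j) z) :
    HasDerivAt (fun t => (A t).det)
      (∑ j, ((A z).updateCol j (fun i => A' i j)).det) z := by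
  have e1 : (fun t => (A t).det)
      = fun t => ∑ σ : Equiv.Perm (Fin n),
          ((Equiv.Perm.sign σ : ℤ) : ℝ) * ∏ i, A t (σ i) i := by
    funext t; rw [Matrix.det_apply']
  rw [e1]
  have H : HasDerivAt (fun t => ∑ σ : Equiv.Perm (Fin n),
      ((Equiv.Perm.sign σ : ℤ) : ℝ) * ∏ i, A t (σ i) i)
      (∑ σ : Equiv.Perm (Fin n), ((Equiv.Perm.sign σ : ℤ) : ℝ) *
        ∑ j, (∏ i ∈ Finset.univ.erase j, A z (σ i) i) * A' (σ j) j) z := by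
    apply HasDerivAt.fun_sum
    intro σ _
    have h2 := HasDerivAt.finset_prod (u := Finset.univ)
      (f := fun (i : Fin n) (t : ℝ) => A t (σ i) i)
      (f' := fun i => A' (σ i) i) (fun i _ => h (σ i) i)
    simpa [smul_eq_mul, mul_comm] using h2.const_mul (((Equiv.Perm.sign σ : ℤ) : ℝ))
  convert H using 1
  have e2 : ∀ j, ((A z).updateCol j (fun i => A' i j)).det
      = ∑ σ : Equiv.Perm (Fin n), ((Equiv.Perm.sign σ : ℤ) : ℝ) *
          ((∏ i ∈ Finset.univ.erase j, A z (σ i) i) * A' (σ j) j) := by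
    intro j
    rw [Matrix.det_apply']
    refine Finset.sum_congr rfl fun σ _ => ?_
    congr 1
    rw [← Finset.mul_prod_erase Finset.univ _ (Finset.mem_univ j)]
    rw [Matrix.updateCol_apply, if_pos rfl, mul_comm]
    congr 1
    refine Finset.prod_congr rfl fun i hi => ?_
    rw [Matrix.updateCol_apply, if_neg (Finset.ne_of_mem_erase hi)]
  simp_rw [e2]
  rw [Finset.sum_comm]
  simp_rw [Finset.mul_sum]

/-- Entries of the adjugate are signed cofactors. -/
lemma adj_cof {m : ℕ} (A : Matrix (Fin (m+1)) (Fin (m+1)) ℝ) (i j : Fin (m+1)) :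
    A.adjugate i j = (-1:ℝ)^((i:ℕ)+(j:ℕ)) * (A.submatrix j.succAbove i.succAbove).det := by
  rw [Matrix.adjugate_apply, Matrix.det_succ_row _ j, Finset.sum_eq_single i]
  · have h1 : A.updateRow j (Pi.single i 1) j i = 1 := by simp
    have h2 : (A.updateRow j (Pi.single i 1)).submatrix j.succAbove i.succAbove
        = A.submatrix j.succAbove i.succAbove := by
      ext a b
      simp [Matrix.submatrix_apply, Matrix.updateRow_ne (Fin.succAbove_ne j a)]
    rw [h1, h2, mul_one, add_comm (j:ℕ) (i:ℕ)]
  · intro c _ hc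
    have h0 : A.updateRow j (Pi.single i 1) j c = 0 := by
      simp [Pi.single_eq_of_ne hc]
    rw [h0]; ring
  · intro h; exact absurd (Finset.mem_univ i) h

/-- The key determinantal identity behind the Desnanot–Jacobi identity, for the last two
rows and columns. -/
lemma det_mul_corner (k : ℕ) (A : Matrix (Fin (k+2)) (Fin (k+2)) ℝ) :
    A.det * (A.adjugate ⟨k, by omega⟩ ⟨k, by omega⟩
        * A.adjugate (Fin.last (k+1)) (Fin.last (k+1))
      - A.adjugate ⟨k, by omega⟩ (Fin.last (k+1))
        * A.adjugate (Fin.last (k+1)) ⟨k, by omega⟩)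
    = (A.submatrix (Fin.castLE (Nat.le_add_right k 2)) (Fin.castLE (Nat.le_add_right k 2))).det
        * A.det ^ 2 := by
  classical
  set p : Fin (k+2) := ⟨k, by omega⟩ with hp
  set q : Fin (k+2) := Fin.last (k+1) with hq
  have hqp : q ≠ p := by
    intro h; have := congrArg Fin.val h; simp [hp, hq, Fin.last] at this
  set e : Fin k ⊕ Fin 2 ≃ Fin (k+2) := finSumFinEquiv with he
  have he0 : e (Sum.inr 0) = p := by
    apply Fin.ext; simp [he, finSumFinEquiv_apply_right, hp]
  have he1 : e (Sum.inr 1) = q := by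
    apply Fin.ext; simp [he, finSumFinEquiv_apply_right, hq, Fin.last]
  have hel : ∀ i : Fin k, ((e (Sum.inl i) : Fin (k+2)) : ℕ) = (i : ℕ) := by
    intro i; simp [he, finSumFinEquiv_apply_left]
  have help : ∀ i : Fin k, e (Sum.inl i) ≠ p := by
    intro i h
    have h2 := congrArg Fin.val h
    rw [hel i] at h2; simp [hp] at h2; omega
  have helq : ∀ i : Fin k, e (Sum.inl i) ≠ q := by
    intro i h
    have h2 := congrArg Fin.val h
    rw [hel i] at h2; simp [hq, Fin.last] at h2; omega
  have hor : ∀ s : Fin 2, (s = 0 ∧ e (Sum.inr s) = p) ∨ (s = 1 ∧ e (Sum.inr s) = q) := by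
    intro s
    have hs := s.isLt
    have hs2 : (s:ℕ) = 0 ∨ (s:ℕ) = 1 := by omega
    rcases hs2 with h | h
    · left; constructor
      · exact Fin.ext h
      · rw [show s = 0 from Fin.ext h]; exact he0
    · right; constructor
      · exact Fin.ext h
      · rw [show s = 1 from Fin.ext h]; exact he1
  set B : Matrix (Fin (k+2)) (Fin (k+2)) ℝ :=
    Matrix.of (fun i j => if j = p then A.adjugate i p else if j = q then A.adjugate i q
      else if i = j then 1 else 0) with hB
  have hcolr : ∀ (i : Fin (k+2)) (s : Fin 2),
      B i (e (Sum.inr s)) = A.adjugate i (e (Sum.inr s)) := by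
    intro i s
    rcases hor s with ⟨_, h⟩ | ⟨_, h⟩ <;> rw [h]
    · simp [hB]
    · simp [hB, hqp]
  have hcoll : ∀ (i : Fin (k+2)) (i' : Fin k),
      B i (e (Sum.inl i')) = if i = e (Sum.inl i') then 1 else 0 := by
    intro i i'
    simp [hB, help i', helq i']
  set Y : Matrix (Fin 2) (Fin 2) ℝ :=
    Matrix.of (fun r s => A.adjugate (e (Sum.inr r)) (e (Sum.inr s))) with hY
  set X : Matrix (Fin k) (Fin 2) ℝ :=
    Matrix.of (fun i s => A.adjugate (e (Sum.inl i)) (e (Sum.inr s))) with hX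
  have hBblock : B.submatrix e e = Matrix.fromBlocks 1 X 0 Y := by
    ext u v
    rcases u with i | r <;> rcases v with i' | s
    · rw [Matrix.submatrix_apply, hcoll]
      simp [Matrix.one_apply, Equiv.apply_eq_iff_eq]
    · rw [Matrix.submatrix_apply, hcolr]; rfl
    · rw [Matrix.submatrix_apply, hcoll]
      have hne : e (Sum.inr r) ≠ e (Sum.inl i') := by
        simp [Equiv.apply_eq_iff_eq]
      simp [hne]
    · rw [Matrix.submatrix_apply, hcolr]; rfl
  have hdetB : B.det = A.adjugate p p * A.adjugate q q - A.adjugate p q * A.adjugate q p := by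
    rw [← Matrix.det_submatrix_equiv_self e B, hBblock, Matrix.det_fromBlocks_zero₂₁,
      Matrix.det_one, one_mul, Matrix.det_fin_two]
    simp only [hY, Matrix.of_apply, he0, he1]
  have hABe : ∀ i j, (A * B) i j =
      if j = p then A.det * (if i = p then (1:ℝ) else 0)
      else if j = q then A.det * (if i = q then (1:ℝ) else 0)
      else A i j := by
    intro i j
    rw [Matrix.mul_apply]
    by_cases h1 : j = p
    · rw [if_pos h1]
      have hBl : ∀ l, B l j = A.adjugate l p := by
        intro l; simp only [hB, Matrix.of_apply]; rw [if_pos h1]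
      simp_rw [hBl]
      rw [← Matrix.mul_apply, Matrix.mul_adjugate]
      simp [Matrix.smul_apply, Matrix.one_apply]
    · rw [if_neg h1]
      by_cases h2 : j = q
      · rw [if_pos h2]
        have hBl : ∀ l, B l j = A.adjugate l q := by
          intro l; simp only [hB, Matrix.of_apply]; rw [if_neg h1, if_pos h2]
        simp_rw [hBl]
        rw [← Matrix.mul_apply, Matrix.mul_adjugate]
        simp [Matrix.smul_apply, Matrix.one_apply]
      · rw [if_neg h2]
        have hBl : ∀ l, B l j = if l = j then (1:ℝ) else 0 := by
          intro l; simp only [hB, Matrix.of_apply]; rw [if_neg h1, if_neg h2]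
        simp_rw [hBl]
        simp [mul_ite, mul_one, mul_zero]
  set C : Matrix (Fin 2) (Fin k) ℝ :=
    Matrix.of (fun r i' => (A * B) (e (Sum.inr r)) (e (Sum.inl i'))) with hC
  have hABblock : (A * B).submatrix e e
      = Matrix.fromBlocks (A.submatrix (fun i => e (Sum.inl i)) (fun i => e (Sum.inl i))) 0
          C (A.det • 1) := by
    ext u v
    rcases u with i | r <;> rcases v with i' | s
    · rw [Matrix.submatrix_apply, hABe, if_neg (help i'), if_neg (helq i')]; rfl
    · rw [Matrix.submatrix_apply, hABe]
      rcases hor s with ⟨_, h⟩ | ⟨_, h⟩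
      · rw [if_pos h, if_neg (help i)]; simp
      · rw [if_neg (by rw [h]; exact hqp), if_pos h, if_neg (helq i)]; simp
    · rw [Matrix.submatrix_apply]; rfl
    · rw [Matrix.submatrix_apply, hABe]
      have hrs : ∀ s' : Fin 2, (e (Sum.inr r) = e (Sum.inr s')) ↔ r = s' := by
        intro s'; simp [Equiv.apply_eq_iff_eq]
      rcases hor s with ⟨hs, h⟩ | ⟨hs, h⟩ <;> subst hs
      · rw [if_pos h, ← he0]
        by_cases hr : r = 0
        · rw [if_pos ((hrs 0).mpr hr), hr]; simp [Matrix.smul_apply, Matrix.one_apply]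
        · rw [if_neg (fun hh => hr ((hrs 0).mp hh))]
          simp [Matrix.smul_apply, Matrix.one_apply, hr]
      · rw [if_neg (by rw [h]; exact hqp), if_pos h, ← he1]
        by_cases hr : r = 1
        · rw [if_pos ((hrs 1).mpr hr), hr]; simp [Matrix.smul_apply, Matrix.one_apply]
        · rw [if_neg (fun hh => hr ((hrs 1).mp hh))]
          simp [Matrix.smul_apply, Matrix.one_apply, hr]
  have hdetAB : (A * B).det
      = (A.submatrix (fun i => e (Sum.inl i)) (fun i => e (Sum.inl i))).det * A.det ^ 2 := by
    rw [← Matrix.det_submatrix_equiv_self e (A * B), hABblock, Matrix.det_fromBlocks_zero₁₂,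
      Matrix.det_smul, Matrix.det_one, Fintype.card_fin]
    ring
  have hsub : (fun i : Fin k => e (Sum.inl i)) = Fin.castLE (Nat.le_add_right k 2) := by
    funext i; exact Fin.ext (by rw [hel]; simp)
  calc A.det * (A.adjugate p p * A.adjugate q q - A.adjugate p q * A.adjugate q p)
      = A.det * B.det := by rw [hdetB]
    _ = (A * B).det := (Matrix.det_mul A B).symm
    _ = (A.submatrix (Fin.castLE (Nat.le_add_right k 2))
          (Fin.castLE (Nat.le_add_right k 2))).det * A.det ^ 2 := by
        rw [hdetAB, hsub]

/-- The auxiliary determinant `K_n`: the Hankel matrix of size `m+1` with both the last row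
and the last column index shifted by one. -/
noncomputable def Kdet (μ : ℕ → ℝ → ℝ) (m : ℕ) (z : ℝ) : ℝ :=
  Matrix.det (Matrix.of fun i j : Fin (m+1) =>
    μ ((if (i:ℕ) = m then m+1 else (i:ℕ)) + (if (j:ℕ) = m then m+1 else (j:ℕ))) z)

/-- Desnanot–Jacobi identity for the Hankel determinants. -/
lemma hankel_jacobi (μ : ℕ → ℝ → ℝ) (k : ℕ) (z : ℝ) (h2 : hankel μ (k+2) z ≠ 0) :
    Kdet μ k z * hankel μ (k+1) z - hankelShift μ (k+1) z ^ 2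
      = hankel μ (k+2) z * hankel μ k z := by
  classical
  set A : Matrix (Fin (k+2)) (Fin (k+2)) ℝ :=
    Matrix.of (fun i j => μ ((i:ℕ)+(j:ℕ)) z) with hA
  have hdetA : A.det = hankel μ (k+2) z := rfl
  set p : Fin (k+2) := ⟨k, by omega⟩ with hp
  have hval : ∀ i : Fin (k+1), ((p.succAbove i : Fin (k+2)) : ℕ)
      = if (i:ℕ) = k then k+1 else (i:ℕ) := by
    intro i
    rcases Nat.lt_or_ge (i:ℕ) k with h | h
    · rw [Fin.succAbove_of_castSucc_lt]
      · simp [Nat.ne_of_lt h]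
      · simp [Fin.lt_def, hp, h]
    · have hik : (i:ℕ) = k := by have := i.isLt; omega
      rw [Fin.succAbove_of_le_castSucc]
      · simp [hik]
      · simp [Fin.le_def, hp, hik]
  have m1 : (A.submatrix p.succAbove p.succAbove).det = Kdet μ k z := by
    unfold Kdet
    congr 1
    ext i j
    simp only [Matrix.submatrix_apply, Matrix.of_apply, hA]
    rw [hval, hval]
  have m2 : (A.submatrix (Fin.last (k+1)).succAbove (Fin.last (k+1)).succAbove).det
      = hankel μ (k+1) z := by
    rw [Fin.succAbove_last]
    unfold hankel
    congr 1
  have m3 : (A.submatrix (Fin.last (k+1)).succAbove p.succAbove).det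
      = hankelShift μ (k+1) z := by
    rw [Fin.succAbove_last]
    show _ = Matrix.det (Matrix.of fun i j : Fin (k + 1) =>
      if (j : ℕ) = k then μ ((i : ℕ) + k + 1) z else μ ((i : ℕ) + (j : ℕ)) z)
    congr 1
    ext i j
    simp only [Matrix.submatrix_apply, Matrix.of_apply, hA, Fin.coe_castSucc]
    rw [hval]
    split_ifs with h
    · first | rfl | (congr 1; omega)
    · first | rfl | (congr 1; omega)
  have m4 : (A.submatrix p.succAbove (Fin.last (k+1)).succAbove).det
      = hankelShift μ (k+1) z := by
    rw [Fin.succAbove_last]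
    have ht : A.submatrix p.succAbove Fin.castSucc
        = (Matrix.of fun i j : Fin (k + 1) =>
            if (j : ℕ) = k then μ ((i : ℕ) + k + 1) z else μ ((i : ℕ) + (j : ℕ)) z)ᵀ := by
      ext i j
      simp only [Matrix.submatrix_apply, Matrix.of_apply, Matrix.transpose_apply, hA,
        Fin.coe_castSucc]
      rw [hval]
      split_ifs with h
      · first | rfl | (congr 1; omega)
      · first | rfl | (congr 1; omega)
    rw [ht, Matrix.det_transpose]
    rfl
  have m5 : (A.submatrix (Fin.castLE (Nat.le_add_right k 2))
      (Fin.castLE (Nat.le_add_right k 2))).det = hankel μ k z := by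
    unfold hankel
    congr 1
  have key := det_mul_corner k A
  have hppv : ((p : Fin (k+2)) : ℕ) = k := rfl
  have hqv : ((Fin.last (k+1) : Fin (k+2)) : ℕ) = k + 1 := rfl
  have c1 : A.adjugate p p = Kdet μ k z := by
    rw [adj_cof, m1, hppv]
    have hone : (-1:ℝ)^(k+k) = 1 := by
      rw [← two_mul, pow_mul]; norm_num
    rw [hone, one_mul]
  have c2 : A.adjugate (Fin.last (k+1)) (Fin.last (k+1)) = hankel μ (k+1) z := by
    rw [adj_cof, m2, hqv]
    have hone : (-1:ℝ)^((k+1)+(k+1)) = 1 := by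
      rw [← two_mul, pow_mul]; norm_num
    rw [hone, one_mul]
  have c3 : A.adjugate p (Fin.last (k+1)) = -hankelShift μ (k+1) z := by
    rw [adj_cof, m3, hppv, hqv]
    have hone : (-1:ℝ)^(k+(k+1)) = -1 := by
      rw [show k+(k+1) = 2*k+1 by omega, pow_succ, pow_mul]; norm_num
    rw [hone]; ring
  have c4 : A.adjugate (Fin.last (k+1)) p = -hankelShift μ (k+1) z := by
    rw [adj_cof, m4, hppv, hqv]
    have hone : (-1:ℝ)^((k+1)+k) = -1 := by
      rw [show (k+1)+k = 2*k+1 by omega, pow_succ, pow_mul]; norm_num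
    rw [hone]; ring
  rw [show (⟨k, by omega⟩ : Fin (k+2)) = p from rfl] at key
  rw [c1, c2, c3, c4, m5, hdetA] at key
  have key2 : hankel μ (k+2) z * (Kdet μ k z * hankel μ (k+1) z - hankelShift μ (k+1) z ^ 2)
      = hankel μ (k+2) z * (hankel μ (k+2) z * hankel μ k z) := by
    rw [show Kdet μ k z * hankel μ (k+1) z - hankelShift μ (k+1) z ^ 2
        = Kdet μ k z * hankel μ (k+1) z
          - -hankelShift μ (k+1) z * -hankelShift μ (k+1) z by ring, key]
    ring
  exact mul_left_cancel₀ h2 key2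

/-- Iterates of the Euler operator preserve smoothness on `(0,∞)`. -/
lemma euler_iter_contDiffOn (μ0 : ℝ → ℝ) (h : ContDiffOn ℝ (⊤ : ℕ∞) μ0 (Set.Ioi 0)) :
    ∀ k, ContDiffOn ℝ (⊤ : ℕ∞) (eulerOp^[k] μ0) (Set.Ioi 0) := by
  intro k
  induction k with
  | zero => simpa using h
  | succ k ih =>
    rw [Function.iterate_succ_apply']
    have hd : ContDiffOn ℝ (⊤ : ℕ∞) (deriv (eulerOp^[k] μ0)) (Set.Ioi 0) :=
      ih.deriv_of_isOpen isOpen_Ioi (by simp)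
    exact contDiffOn_id.mul hd

/-- If the moments satisfy `μ_k = δ_z^k(μ_0)` on `(0,∞)` with `μ_0` smooth, and `Δ_n ≠ 0`
for all `n ≥ 0` on an open interval `I ⊆ (0,∞)`, then on `I` the recurrence coefficients
satisfy the Toda system: `δ_z(a_n²) = a_n²(b_n − b_{n−1})` for `n ≥ 1`, and
`δ_z(b_n) = a_{n+1}² − a_n²` for `n ≥ 0`. -/
theorem toda_system_of_moments_eulerOp (μ : ℕ → ℝ → ℝ) (I : Set ℝ)
    (hI : IsOpen I) (hIsub : I ⊆ Set.Ioi (0 : ℝ))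
    (hsmooth : ContDiffOn ℝ (⊤ : ℕ∞) (μ 0) (Set.Ioi 0))
    (hmom : ∀ k : ℕ, ∀ z ∈ Set.Ioi (0 : ℝ), μ k z = eulerOp^[k] (μ 0) z)
    (hΔ : ∀ n : ℕ, ∀ z ∈ I, hankel μ n z ≠ 0) :
    (∀ n : ℕ, 1 ≤ n → ∀ z ∈ I,
      eulerOp (aSq μ n) z = aSq μ n z * (bCoef μ n z - bCoef μ (n - 1) z)) ∧
    (∀ n : ℕ, ∀ z ∈ I,
      eulerOp (bCoef μ n) z = aSq μ (n + 1) z - aSq μ n z) := by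
  have hE : ∀ k, ContDiffOn ℝ (⊤ : ℕ∞) (eulerOp^[k] (μ 0)) (Set.Ioi 0) :=
    euler_iter_contDiffOn _ hsmooth
  have hEd : ∀ (k : ℕ) (z : ℝ), z ∈ Set.Ioi (0:ℝ) →
      HasDerivAt (μ k) (deriv (eulerOp^[k] (μ 0)) z) z := by
    intro k z hz
    have h1 : HasDerivAt (eulerOp^[k] (μ 0)) (deriv (eulerOp^[k] (μ 0)) z) z := by
      have h2 := ((hE k).differentiableOn (by simp)).differentiableAt (isOpen_Ioi.mem_nhds hz)
      exact h2.hasDerivAt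
    exact h1.congr_of_eventuallyEq
      (Filter.eventually_of_mem (isOpen_Ioi.mem_nhds hz) (hmom k))
  have hscale : ∀ (k : ℕ) (z : ℝ), z ∈ Set.Ioi (0:ℝ) →
      z * deriv (eulerOp^[k] (μ 0)) z = μ (k+1) z := by
    intro k z hz
    rw [hmom (k+1) z hz, Function.iterate_succ_apply']
    rfl
  -- derivative of the Hankel determinant
  have hDd : ∀ (n : ℕ) (z : ℝ), z ∈ Set.Ioi (0:ℝ) →
      HasDerivAt (hankel μ n) (hankelShift μ n z / z) z := by
    intro n z hz
    have hz0 : z ≠ 0 := ne_of_gt hz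
    have H := hasDerivAt_det (A := fun t => Matrix.of fun i j : Fin n => μ ((i:ℕ)+(j:ℕ)) t)
      (A' := Matrix.of fun i j : Fin n => deriv (eulerOp^[(i:ℕ)+(j:ℕ)] (μ 0)) z) (z := z)
      (fun i j => hEd _ z hz)
    have hterm : ∀ j : Fin n,
        z * (((Matrix.of fun i j : Fin n => μ ((i:ℕ)+(j:ℕ)) z)).updateCol j
          (fun i => (Matrix.of fun i j : Fin n =>
            deriv (eulerOp^[(i:ℕ)+(j:ℕ)] (μ 0)) z) i j)).det
        = (((Matrix.of fun i j : Fin n => μ ((i:ℕ)+(j:ℕ)) z)).updateCol j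
            (fun i => μ ((i:ℕ)+(j:ℕ)+1) z)).det := by
      intro j
      have hcol : (z • fun i : Fin n => deriv (eulerOp^[(i:ℕ)+(j:ℕ)] (μ 0)) z)
          = fun i : Fin n => μ ((i:ℕ)+(j:ℕ)+1) z := by
        funext i; simp only [Pi.smul_apply, smul_eq_mul]; exact hscale _ z hz
      rw [← hcol, Matrix.det_updateCol_smul]
      rfl
    have hval : z * (∑ j, (((Matrix.of fun i j : Fin n => μ ((i:ℕ)+(j:ℕ)) z)).updateCol j
        (fun i => (Matrix.of fun i j : Fin n =>
          deriv (eulerOp^[(i:ℕ)+(j:ℕ)] (μ 0)) z) i j)).det)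
        = hankelShift μ n z := by
      rw [Finset.mul_sum]
      rw [Finset.sum_congr rfl (fun j _ => hterm j)]
      rcases n with _ | m
      · show (0:ℝ) = hankelShift μ 0 z
        simp [hankelShift]
      · rw [Finset.sum_eq_single (Fin.last m)]
        · show _ = hankelShift μ (m+1) z
          rw [show hankelShift μ (m+1) z = Matrix.det (Matrix.of fun i j : Fin (m + 1) =>
            if (j : ℕ) = m then μ ((i : ℕ) + m + 1) z else μ ((i : ℕ) + (j : ℕ)) z) from rfl]
          congr 1
          ext i j
          rw [Matrix.updateCol_apply]
          by_cases h : j = Fin.last m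
          · rw [if_pos h, h]
            simp [Fin.val_last]
          · have hjm : ¬ (j:ℕ) = m := fun hh => h (Fin.ext (by simp [hh]))
            rw [if_neg h]
            simp [hjm]
        · intro j _ hj
          have hjm : (j:ℕ) < m := by
            have h1 := j.isLt
            have h2 : (j:ℕ) ≠ m := fun hh => hj (Fin.ext (by simp [hh]))
            omega
          apply Matrix.det_zero_of_column_eq (M := _) (i := j) (j := ⟨(j:ℕ)+1, by omega⟩)
          · intro hh
            have := congrArg Fin.val hh
            simp at this
          · intro r
            rw [Matrix.updateCol_apply, if_pos rfl, Matrix.updateCol_apply,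
              if_neg (by intro hh; have := congrArg Fin.val hh; simp at this)]
            rfl
        · intro h; exact absurd (Finset.mem_univ _) h
    have hS : (∑ j, (((Matrix.of fun i j : Fin n => μ ((i:ℕ)+(j:ℕ)) z)).updateCol j
        (fun i => (Matrix.of fun i j : Fin n =>
          deriv (eulerOp^[(i:ℕ)+(j:ℕ)] (μ 0)) z) i j)).det)
        = hankelShift μ n z / z := by
      rw [eq_div_iff hz0, mul_comm]; exact hval
    exact hS ▸ H
  -- derivative of the shifted Hankel determinant
  have hSd : ∀ (m : ℕ) (z : ℝ), z ∈ Set.Ioi (0:ℝ) →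
      HasDerivAt (hankelShift μ (m+1)) (Kdet μ m z / z) z := by
    intro m z hz
    have hz0 : z ≠ 0 := ne_of_gt hz
    have hrep : hankelShift μ (m+1) = fun t => (Matrix.of fun i j : Fin (m+1) =>
        if (i:ℕ) = m then μ ((j:ℕ) + m + 1) t else μ ((j:ℕ) + (i:ℕ)) t).det := by
      funext t
      rw [show hankelShift μ (m+1) t = (Matrix.of fun i j : Fin (m+1) =>
        if (j:ℕ) = m then μ ((i:ℕ) + m + 1) t else μ ((i:ℕ) + (j:ℕ)) t).det from rfl]
      rw [← Matrix.det_transpose]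
      rfl
    rw [hrep]
    have hent : ∀ (i j : Fin (m+1)), HasDerivAt
        (fun t => (Matrix.of fun i j : Fin (m+1) =>
          if (i:ℕ) = m then μ ((j:ℕ) + m + 1) t else μ ((j:ℕ) + (i:ℕ)) t) i j)
        ((Matrix.of fun i j : Fin (m+1) =>
          if (i:ℕ) = m then deriv (eulerOp^[(j:ℕ)+m+1] (μ 0)) z
          else deriv (eulerOp^[(j:ℕ)+(i:ℕ)] (μ 0)) z) i j) z := by
      intro i j
      by_cases h : (i:ℕ) = m
      · simp only [Matrix.of_apply, if_pos h]
        exact hEd _ z hz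
      · simp only [Matrix.of_apply, if_neg h]
        exact hEd _ z hz
    have H := hasDerivAt_det
      (A := fun t => Matrix.of fun i j : Fin (m+1) =>
        if (i:ℕ) = m then μ ((j:ℕ) + m + 1) t else μ ((j:ℕ) + (i:ℕ)) t)
      (A' := Matrix.of fun i j : Fin (m+1) =>
        if (i:ℕ) = m then deriv (eulerOp^[(j:ℕ)+m+1] (μ 0)) z
        else deriv (eulerOp^[(j:ℕ)+(i:ℕ)] (μ 0)) z)
      (z := z) hent
    have hterm : ∀ j : Fin (m+1),
        z * (((Matrix.of fun i j : Fin (m+1) =>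
            if (i:ℕ) = m then μ ((j:ℕ) + m + 1) z else μ ((j:ℕ) + (i:ℕ)) z)).updateCol j
          (fun i => (Matrix.of fun i j : Fin (m+1) =>
            if (i:ℕ) = m then deriv (eulerOp^[(j:ℕ)+m+1] (μ 0)) z
            else deriv (eulerOp^[(j:ℕ)+(i:ℕ)] (μ 0)) z) i j)).det
        = (((Matrix.of fun i j : Fin (m+1) =>
            if (i:ℕ) = m then μ ((j:ℕ) + m + 1) z else μ ((j:ℕ) + (i:ℕ)) z)).updateCol j
            (fun i => if (i:ℕ) = m then μ ((j:ℕ)+m+1+1) z else μ ((j:ℕ)+(i:ℕ)+1) z)).det := by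
      intro j
      have hcol : (z • fun i : Fin (m+1) =>
          (Matrix.of fun i j : Fin (m+1) =>
            if (i:ℕ) = m then deriv (eulerOp^[(j:ℕ)+m+1] (μ 0)) z
            else deriv (eulerOp^[(j:ℕ)+(i:ℕ)] (μ 0)) z) i j)
          = fun i : Fin (m+1) =>
            if (i:ℕ) = m then μ ((j:ℕ)+m+1+1) z else μ ((j:ℕ)+(i:ℕ)+1) z := by
        funext i
        simp only [Pi.smul_apply, smul_eq_mul, Matrix.of_apply]
        by_cases h : (i:ℕ) = m
        · rw [if_pos h, if_pos h]; exact hscale _ z hz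
        · rw [if_neg h, if_neg h]; exact hscale _ z hz
      rw [← hcol, Matrix.det_updateCol_smul]
    have hval : z * (∑ j, (((Matrix.of fun i j : Fin (m+1) =>
        if (i:ℕ) = m then μ ((j:ℕ) + m + 1) z else μ ((j:ℕ) + (i:ℕ)) z)).updateCol j
          (fun i => (Matrix.of fun i j : Fin (m+1) =>
            if (i:ℕ) = m then deriv (eulerOp^[(j:ℕ)+m+1] (μ 0)) z
            else deriv (eulerOp^[(j:ℕ)+(i:ℕ)] (μ 0)) z) i j)).det)
        = Kdet μ m z := by
      rw [Finset.mul_sum]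
      rw [Finset.sum_congr rfl (fun j _ => hterm j)]
      rw [Finset.sum_eq_single (Fin.last m)]
      · unfold Kdet
        congr 1
        ext i j
        simp only [Matrix.updateCol_apply, Matrix.of_apply, Fin.ext_iff, Fin.val_last]
        split_ifs <;> first | rfl | (congr 1; omega) | omega
      · intro j _ hj
        have hjm : (j:ℕ) < m := by
          have h1 := j.isLt
          have h2 : (j:ℕ) ≠ m := fun hh => hj (Fin.ext (by simp [hh]))
          omega
        apply Matrix.det_zero_of_column_eq (M := _) (i := j) (j := ⟨(j:ℕ)+1, by omega⟩)
        · intro hh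
          have := congrArg Fin.val hh
          simp at this
        · intro r
          simp only [Matrix.updateCol_apply, Matrix.of_apply, Fin.ext_iff, Fin.val_last]
          split_ifs <;> first | rfl | (congr 1; omega) | omega
      · intro h; exact absurd (Finset.mem_univ _) h
    have hS : (∑ j, (((Matrix.of fun i j : Fin (m+1) =>
        if (i:ℕ) = m then μ ((j:ℕ) + m + 1) z else μ ((j:ℕ) + (i:ℕ)) z)).updateCol j
          (fun i => (Matrix.of fun i j : Fin (m+1) =>
            if (i:ℕ) = m then deriv (eulerOp^[(j:ℕ)+m+1] (μ 0)) z
            else deriv (eulerOp^[(j:ℕ)+(i:ℕ)] (μ 0)) z) i j)).det)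
        = Kdet μ m z / z := by
      rw [eq_div_iff hz0, mul_comm]; exact hval
    exact hS ▸ H
  -- derivative of Δ̃_m/Δ_m
  have hLd : ∀ (m : ℕ) (z : ℝ), z ∈ I →
      HasDerivAt (fun t => hankelShift μ m t / hankel μ m t) (aSq μ m z / z) z := by
    intro m z hz
    have hz0 : z ≠ 0 := ne_of_gt (hIsub hz)
    rcases m with _ | m
    · have hfun : (fun t => hankelShift μ 0 t / hankel μ 0 t) = fun _ => (0:ℝ) := by
        funext t
        show (0:ℝ) / _ = 0
        exact zero_div _
      rw [hfun, show aSq μ 0 z = 0 from rfl, zero_div]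
      exact hasDerivAt_const z 0
    · have hT := hSd m z (hIsub hz)
      have hD := hDd (m+1) z (hIsub hz)
      have h := hT.div hD (hΔ (m+1) z hz)
      have hJ := hankel_jacobi μ m z (hΔ (m+2) z hz)
      have hvq : (Kdet μ m z / z * hankel μ (m+1) z
            - hankelShift μ (m+1) z * (hankelShift μ (m+1) z / z)) / hankel μ (m+1) z ^ 2
          = aSq μ (m+1) z / z := by
        rw [show aSq μ (m+1) z
            = hankel μ (m + 2) z * hankel μ m z / (hankel μ (m + 1) z) ^ 2 from rfl]
        rw [← hJ]
        have h1 := hΔ (m+1) z hz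
        field_simp
      exact hvq ▸ h
  constructor
  · -- first Toda equation
    intro n hn z hz
    obtain ⟨m, rfl⟩ : ∃ m, n = m + 1 := ⟨n - 1, by omega⟩
    have hz0 : z ≠ 0 := ne_of_gt (hIsub hz)
    have hd0 := hDd m z (hIsub hz)
    have hd1 := hDd (m+1) z (hIsub hz)
    have hd2 := hDd (m+2) z (hIsub hz)
    have h := (hd2.mul hd0).div (hd1.pow 2) (pow_ne_zero 2 (hΔ (m+1) z hz))
    have ha : aSq μ (m+1)
        = fun t => hankel μ (m + 2) t * hankel μ m t / (hankel μ (m + 1) t) ^ 2 := rfl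
    show z * deriv (aSq μ (m+1)) z = _
    rw [ha, (show HasDerivAt (fun t => hankel μ (m + 2) t * hankel μ m t / (hankel μ (m + 1) t) ^ 2) _ z from h).deriv, show (m+1) - 1 = m from rfl]
    simp only [bCoef, Pi.mul_apply, Pi.pow_apply]
    have h0 := hΔ m z hz
    have h1 := hΔ (m+1) z hz
    have h2 := hΔ (m+2) z hz
    push_cast
    field_simp
    ring
  · -- second Toda equation
    intro n z hz
    have hz0 : z ≠ 0 := ne_of_gt (hIsub hz)
    have h := (hLd (n+1) z hz).sub (hLd n z hz)
    have hb : bCoef μ n = fun t => hankelShift μ (n + 1) t / hankel μ (n + 1) t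
        - hankelShift μ n t / hankel μ n t := rfl
    show z * deriv (bCoef μ n) z = _
    rw [hb, (show HasDerivAt (fun t => hankelShift μ (n + 1) t / hankel μ (n + 1) t - hankelShift μ n t / hankel μ n t) _ z from h).deriv, mul_sub, mul_div_cancel₀ _ hz0, mul_div_cancel₀ _ hz0]
end

section
/- Suppose the moments satisfy μ_k(z) = δ_z^k(μ_0)(z) for every k ≥ 0, where δ_z = z·d/dz and μ_0 is smooth on (0,∞), and suppose Δ_n(z) ≠ 0 on an open interval of (0,∞). Then for every n ≥ 1 the Hankel determinant satisfies the Toda equation δ_z²(ln Δ_n)(z) = Δ_{n+1}(z)Δ_{n−1}(z)/Δ_n(z)² on that interval. -/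
open Matrix Finset

theorem det_hasDerivAt {N : ℕ} {A : ℝ → Matrix (Fin N) (Fin N) ℝ}
    {A' : Matrix (Fin N) (Fin N) ℝ} {z : ℝ}
    (h : ∀ i j, HasDerivAt (fun t => A t i j) (A' i j) z) :
    HasDerivAt (fun t => (A t).det)
      (∑ j, ((A z).updateCol j (fun i => A' i j)).det) z := by
  classical
  have main : ∀ σ : Equiv.Perm (Fin N), HasDerivAt (fun t => ∏ i, A t (σ i) i)
      (∑ j, (∏ i ∈ Finset.univ.erase j, A z (σ i) i) * A' (σ j) j) z := by
    intro σ
    simpa using HasDerivAt.fun_finsetProd (u := Finset.univ)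
      (f := fun i t => A t (σ i) i) (f' := fun i => A' (σ i) i) (x := z)
      (fun i _ => h (σ i) i)
  have hsum : HasDerivAt
      (fun t => ∑ σ : Equiv.Perm (Fin N), ((Equiv.Perm.sign σ : ℤ) : ℝ) * ∏ i, A t (σ i) i)
      (∑ σ : Equiv.Perm (Fin N), ((Equiv.Perm.sign σ : ℤ) : ℝ) *
        ∑ j, (∏ i ∈ Finset.univ.erase j, A z (σ i) i) * A' (σ j) j) z :=
    HasDerivAt.fun_sum (fun σ _ => (main σ).const_mul _)
  have hfun : (fun t => (A t).det) =
      fun t => ∑ σ : Equiv.Perm (Fin N), ((Equiv.Perm.sign σ : ℤ) : ℝ) * ∏ i, A t (σ i) i :=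
    funext fun t => Matrix.det_apply' _
  rw [hfun]
  have expand : ∀ j : Fin N, ((A z).updateCol j (fun i => A' i j)).det =
      ∑ σ : Equiv.Perm (Fin N), ((Equiv.Perm.sign σ : ℤ) : ℝ) *
        ((∏ i ∈ Finset.univ.erase j, A z (σ i) i) * A' (σ j) j) := by
    intro j
    rw [Matrix.det_apply']
    refine Finset.sum_congr rfl fun σ _ => ?_
    congr 1
    calc ∏ i, ((A z).updateCol j (fun i => A' i j)) (σ i) i
        = ((A z).updateCol j (fun i => A' i j)) (σ j) j *
          ∏ i ∈ Finset.univ.erase j, ((A z).updateCol j (fun i => A' i j)) (σ i) i :=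
          (Finset.mul_prod_erase Finset.univ _ (Finset.mem_univ j)).symm
      _ = A' (σ j) j * ∏ i ∈ Finset.univ.erase j, A z (σ i) i := by
          congr 1
          · simp [Matrix.updateCol_apply]
          · exact Finset.prod_congr rfl fun i hi => by
              rw [Matrix.updateCol_apply, if_neg (Finset.ne_of_mem_erase hi)]
      _ = (∏ i ∈ Finset.univ.erase j, A z (σ i) i) * A' (σ j) j := mul_comm _ _
  have hval : (∑ j, ((A z).updateCol j (fun i => A' i j)).det) =
      ∑ σ : Equiv.Perm (Fin N), ((Equiv.Perm.sign σ : ℤ) : ℝ) *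
        ∑ j, (∏ i ∈ Finset.univ.erase j, A z (σ i) i) * A' (σ j) j := by
    simp_rw [expand, Finset.mul_sum]
    exact Finset.sum_comm
  rw [hval]
  exact hsum

noncomputable def Hmat (ψ : ℝ → ℝ) {N : ℕ} (r c : Fin N → ℕ) (z : ℝ) :
    Matrix (Fin N) (Fin N) ℝ :=
  Matrix.of fun i j => eulerOp^[r i + c j] ψ z

noncomputable def Hfun (ψ : ℝ → ℝ) {N : ℕ} (r c : Fin N → ℕ) (z : ℝ) : ℝ :=
  (Hmat ψ r c z).det

theorem Hfun_symm (ψ : ℝ → ℝ) {N : ℕ} (r c : Fin N → ℕ) (z : ℝ) :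
    Hfun ψ r c z = Hfun ψ c r z := by
  rw [Hfun, Hfun, ← Matrix.det_transpose]
  congr 1
  ext i j
  simp [Hmat, Nat.add_comm]

theorem eulerIter_contDiffOn {ψ : ℝ → ℝ} (hψ : ContDiffOn ℝ (⊤ : ℕ∞) ψ (Set.Ioi 0)) (k : ℕ) :
    ContDiffOn ℝ (⊤ : ℕ∞) (eulerOp^[k] ψ) (Set.Ioi 0) := by
  induction k with
  | zero => simpa using hψ
  | succ k ih =>
    rw [Function.iterate_succ_apply']
    have hd : ContDiffOn ℝ (⊤ : ℕ∞) (deriv (eulerOp^[k] ψ)) (Set.Ioi 0) :=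
      ih.deriv_of_isOpen isOpen_Ioi (by simp)
    exact contDiffOn_id.mul hd

theorem eulerIter_hasDerivAt {ψ : ℝ → ℝ} (hψ : ContDiffOn ℝ (⊤ : ℕ∞) ψ (Set.Ioi 0)) (k : ℕ)
    {z : ℝ} (hz : 0 < z) :
    HasDerivAt (eulerOp^[k] ψ) (eulerOp^[k + 1] ψ z / z) z := by
  have hct := (eulerIter_contDiffOn hψ k).contDiffAt (isOpen_Ioi.mem_nhds hz)
  have hdiff : DifferentiableAt ℝ (eulerOp^[k] ψ) z := hct.differentiableAt (by simp)
  have hval : eulerOp^[k + 1] ψ z / z = deriv (eulerOp^[k] ψ) z := by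
    rw [Function.iterate_succ_apply']
    show eulerOp (eulerOp^[k] ψ) z / z = _
    rw [eulerOp]
    field_simp
  rw [hval]
  exact hdiff.hasDerivAt

theorem Hfun_eq_zero (ψ : ℝ → ℝ) {N : ℕ} (r c : Fin N → ℕ) {j₁ j₂ : Fin N}
    (hne : j₁ ≠ j₂) (h : c j₁ = c j₂) (z : ℝ) : Hfun ψ r c z = 0 :=
  Matrix.det_zero_of_column_eq hne (fun i => by simp [Hmat, h])

theorem Hfun_hasDerivAt {ψ : ℝ → ℝ} (hψ : ContDiffOn ℝ (⊤ : ℕ∞) ψ (Set.Ioi 0)) {N : ℕ}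
    (r c : Fin N → ℕ) {z : ℝ} (hz : 0 < z) :
    HasDerivAt (Hfun ψ r c)
      ((∑ j, Hfun ψ r (Function.update c j (c j + 1)) z) / z) z := by
  classical
  have h := det_hasDerivAt (A := fun t => Hmat ψ r c t)
    (A' := Matrix.of fun i j => eulerOp^[r i + c j + 1] ψ z / z) (z := z)
    (fun i j => eulerIter_hasDerivAt hψ (r i + c j) hz)
  have hval : ∀ j : Fin N,
      ((Hmat ψ r c z).updateCol j
        (fun i => (Matrix.of fun i j => eulerOp^[r i + c j + 1] ψ z / z) i j)).det
      = Hfun ψ r (Function.update c j (c j + 1)) z / z := by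
    intro j
    have h1 : (fun i => (Matrix.of fun i j => eulerOp^[r i + c j + 1] ψ z / z) i j)
        = z⁻¹ • (fun i => eulerOp^[r i + c j + 1] ψ z) := by
      funext i
      simp [div_eq_inv_mul]
    rw [h1, Matrix.det_updateCol_smul]
    rw [div_eq_inv_mul]
    congr 1
    have h2 : (Hmat ψ r c z).updateCol j (fun i => eulerOp^[r i + c j + 1] ψ z)
        = Hmat ψ r (Function.update c j (c j + 1)) z := by
      ext i j'
      rw [Matrix.updateCol_apply]
      by_cases hj : j' = j
      · subst hj; simp [Hmat, Nat.add_assoc]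
      · simp [Hmat, Function.update_apply, hj]
    rw [h2]; rfl
  have hval' : (∑ j, ((Hmat ψ r c z).updateCol j
        (fun i => (Matrix.of fun i j => eulerOp^[r i + c j + 1] ψ z / z) i j)).det)
      = (∑ j, Hfun ψ r (Function.update c j (c j + 1)) z) / z := by
    rw [Finset.sum_div]
    exact Finset.sum_congr rfl fun j _ => hval j
  rw [← hval']
  exact h

/-- the identity shift function and the "last index bumped" shift. -/
def cId (m : ℕ) : Fin (m + 1) → ℕ := fun j => (j : ℕ)

def cHat (m : ℕ) : Fin (m + 1) → ℕ := fun j => if (j : ℕ) = m then m + 1 else (j : ℕ)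

theorem bump_sum (ψ : ℝ → ℝ) (m : ℕ) (r : Fin (m + 1) → ℕ) (z : ℝ) :
    ∑ j, Hfun ψ r (Function.update (cId m) j (cId m j + 1)) z = Hfun ψ r (cHat m) z := by
  classical
  rw [Finset.sum_eq_single (Fin.last m)]
  · congr 1
    funext j'
    simp only [Function.update_apply, cId, cHat, Fin.val_last]
    by_cases hj : j' = Fin.last m
    · subst hj; simp
    · rw [if_neg hj, if_neg (fun h => hj (Fin.ext (by simp [h])))]
  · intro j _ hj
    have hlt : (j : ℕ) < m := Fin.val_lt_last hj
    refine Hfun_eq_zero ψ r _ (j₁ := j) (j₂ := ⟨(j : ℕ) + 1, by omega⟩)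
      (fun h => by rw [Fin.ext_iff] at h; simp at h) ?_ z
    have h1 : Function.update (cId m) j (cId m j + 1) j = (j : ℕ) + 1 := by simp [cId]
    have h2 : Function.update (cId m) j (cId m j + 1) ⟨(j : ℕ) + 1, by omega⟩ = (j : ℕ) + 1 := by
      rw [Function.update_apply, if_neg (fun h => by rw [Fin.ext_iff] at h; simp at h)]
      rfl
    rw [h1, h2]
  · intro h; exact absurd (Finset.mem_univ _) h

theorem adjugate_entry {N : ℕ} (M : Matrix (Fin (N + 1)) (Fin (N + 1)) ℝ) (i j : Fin (N + 1)) :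
    M.adjugate i j = (-1) ^ ((i : ℕ) + (j : ℕ)) * (M.submatrix j.succAbove i.succAbove).det := by
  classical
  rw [Matrix.adjugate_apply, Matrix.det_succ_row _ j]
  rw [Finset.sum_eq_single i]
  · rw [Matrix.updateRow_self, Pi.single_eq_same,
      Matrix.submatrix_updateRow_succAbove, add_comm ((j : ℕ)) ((i : ℕ))]
    ring
  · intro k _ hk
    rw [Matrix.updateRow_self, Pi.single_eq_of_ne hk]
    ring
  · intro h; exact absurd (Finset.mem_univ _) h

theorem dj_block {N : ℕ} (M : Matrix (Fin N ⊕ Fin 2) (Fin N ⊕ Fin 2) ℝ) :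
    M.det * (M.adjugate (Sum.inr 0) (Sum.inr 0) * M.adjugate (Sum.inr 1) (Sum.inr 1)
      - M.adjugate (Sum.inr 0) (Sum.inr 1) * M.adjugate (Sum.inr 1) (Sum.inr 0))
    = M.det ^ 2 * (M.submatrix Sum.inl Sum.inl).det := by
  classical
  set B := M.adjugate with hBdef
  set X : Matrix (Fin N) (Fin 2) ℝ := B.toBlocks₁₂ with hX
  set Y : Matrix (Fin 2) (Fin 2) ℝ := B.toBlocks₂₂ with hY
  have hB : M * B = M.det • 1 := Matrix.mul_adjugate M
  have hB' : Matrix.fromBlocks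
      (M.toBlocks₁₁ * B.toBlocks₁₁ + M.toBlocks₁₂ * B.toBlocks₂₁)
      (M.toBlocks₁₁ * X + M.toBlocks₁₂ * Y)
      (M.toBlocks₂₁ * B.toBlocks₁₁ + M.toBlocks₂₂ * B.toBlocks₂₁)
      (M.toBlocks₂₁ * X + M.toBlocks₂₂ * Y)
      = Matrix.fromBlocks (M.det • 1) 0 0 (M.det • 1) := by
    rw [hX, hY, ← Matrix.fromBlocks_multiply, Matrix.fromBlocks_toBlocks,
      Matrix.fromBlocks_toBlocks, hB, ← Matrix.fromBlocks_one, Matrix.fromBlocks_smul]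
    simp
  have h12 : M.toBlocks₁₁ * X + M.toBlocks₁₂ * Y = 0 := (Matrix.fromBlocks_inj.mp hB').2.1
  have h22 : M.toBlocks₂₁ * X + M.toBlocks₂₂ * Y = M.det • 1 :=
    (Matrix.fromBlocks_inj.mp hB').2.2.2
  set P : Matrix (Fin N ⊕ Fin 2) (Fin N ⊕ Fin 2) ℝ := Matrix.fromBlocks 1 X 0 Y with hP
  have hMP : M * P = Matrix.fromBlocks M.toBlocks₁₁ 0 M.toBlocks₂₁ (M.det • 1) := by
    conv_lhs => rw [← Matrix.fromBlocks_toBlocks M, hP]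
    rw [Matrix.fromBlocks_multiply]
    rw [h12, h22]
    simp
  have hdet1 : M.det * P.det = M.toBlocks₁₁.det * (M.det • (1 : Matrix (Fin 2) (Fin 2) ℝ)).det := by
    rw [← Matrix.det_mul, hMP, Matrix.det_fromBlocks_zero₁₂]
  have hPdet : P.det = Y.det := by
    rw [hP, Matrix.det_fromBlocks_zero₂₁, Matrix.det_one, one_mul]
  have hsm : (M.det • (1 : Matrix (Fin 2) (Fin 2) ℝ)).det = M.det ^ 2 := by
    rw [Matrix.det_smul, Matrix.det_one, Fintype.card_fin, mul_one]
  have hYdet : Y.det =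
      B (Sum.inr 0) (Sum.inr 0) * B (Sum.inr 1) (Sum.inr 1)
        - B (Sum.inr 0) (Sum.inr 1) * B (Sum.inr 1) (Sum.inr 0) := by
    rw [Matrix.det_fin_two]; rfl
  have htl : M.toBlocks₁₁ = M.submatrix Sum.inl Sum.inl := rfl
  calc M.det * (B (Sum.inr 0) (Sum.inr 0) * B (Sum.inr 1) (Sum.inr 1)
      - B (Sum.inr 0) (Sum.inr 1) * B (Sum.inr 1) (Sum.inr 0))
      = M.det * P.det := by rw [hPdet, hYdet]
    _ = M.toBlocks₁₁.det * (M.det • (1 : Matrix (Fin 2) (Fin 2) ℝ)).det := hdet1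
    _ = M.det ^ 2 * (M.submatrix Sum.inl Sum.inl).det := by rw [hsm, htl]; ring

theorem dj_fin {N : ℕ} (M : Matrix (Fin (N + 2)) (Fin (N + 2)) ℝ) :
    M.det * (M.adjugate ⟨N, by omega⟩ ⟨N, by omega⟩ * M.adjugate (Fin.last (N + 1)) (Fin.last (N + 1))
      - M.adjugate ⟨N, by omega⟩ (Fin.last (N + 1)) * M.adjugate (Fin.last (N + 1)) ⟨N, by omega⟩)
    = M.det ^ 2 * (M.submatrix (fun i : Fin N => (⟨(i : ℕ), by omega⟩ : Fin (N + 2)))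
        (fun j : Fin N => (⟨(j : ℕ), by omega⟩ : Fin (N + 2)))).det := by
  classical
  set e : Fin N ⊕ Fin 2 ≃ Fin (N + 2) := finSumFinEquiv with he
  have h0 : e (Sum.inr 0) = (⟨N, by omega⟩ : Fin (N + 2)) := by
    rw [he]; apply Fin.ext; simp [finSumFinEquiv_apply_right]
  have h1 : e (Sum.inr 1) = Fin.last (N + 1) := by
    rw [he]; apply Fin.ext; simp [finSumFinEquiv_apply_right]
  have hA := dj_block (M.submatrix e e)
  rw [Matrix.det_submatrix_equiv_self, Matrix.adjugate_submatrix_equiv_self] at hA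
  simp only [Matrix.submatrix_apply, Matrix.submatrix_submatrix] at hA
  rw [h0, h1] at hA
  have hemb : (e ∘ Sum.inl : Fin N → Fin (N + 2))
      = fun i : Fin N => (⟨(i : ℕ), by omega⟩ : Fin (N + 2)) := by
    funext i
    apply Fin.ext
    simp [he, finSumFinEquiv_apply_left]
  rw [hemb] at hA
  exact hA

/-- If the moments satisfy `μ_k = δ_z^k(μ_0)` on `(0,∞)` with `μ_0` smooth, and `Δ_n ≠ 0`
on an open interval `I ⊆ (0,∞)`, then for every `n ≥ 1` the Hankel determinant satisfies the
Toda equation `δ_z²(ln Δ_n)(z) = Δ_{n+1}(z) Δ_{n−1}(z) / Δ_n(z)²` on `I`. -/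
theorem toda_equation_of_moments_eulerOp (μ : ℕ → ℝ → ℝ) (I : Set ℝ)
    (hI : IsOpen I) (hIsub : I ⊆ Set.Ioi (0 : ℝ))
    (hsmooth : ContDiffOn ℝ (⊤ : ℕ∞) (μ 0) (Set.Ioi 0))
    (hmom : ∀ k : ℕ, ∀ z ∈ Set.Ioi (0 : ℝ), μ k z = eulerOp^[k] (μ 0) z)
    (hΔ : ∀ n : ℕ, ∀ z ∈ I, hankel μ n z ≠ 0) :
    ∀ n : ℕ, 1 ≤ n → ∀ z ∈ I,
      eulerOp^[2] (fun w => Real.log (hankel μ n w)) z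
        = hankel μ (n + 1) z * hankel μ (n - 1) z / (hankel μ n z) ^ 2 := by
  classical
  intro n hn z hz
  obtain ⟨m, rfl⟩ : ∃ m, n = m + 1 := ⟨n - 1, by omega⟩
  have hz0 : (0 : ℝ) < z := hIsub hz
  -- translation from hankel to Hfun
  have hank : ∀ (k : ℕ) (r c : Fin k → ℕ), (∀ i, r i = (i : ℕ)) → (∀ j, c j = (j : ℕ)) →
      ∀ w ∈ Set.Ioi (0 : ℝ), hankel μ k w = Hfun (μ 0) r c w := by
    intro k r c hr hc w hw
    unfold hankel Hfun Hmat
    congr 1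
    ext i j
    simp only [Matrix.of_apply]
    rw [hr, hc]
    exact hmom _ w hw
  set F : ℝ → ℝ := Hfun (μ 0) (cId m) (cId m) with hFdef
  set G : ℝ → ℝ := Hfun (μ 0) (cId m) (cHat m) with hGdef
  set K : ℝ → ℝ := Hfun (μ 0) (cHat m) (cHat m) with hKdef
  have hFhank : ∀ w ∈ Set.Ioi (0 : ℝ), hankel μ (m + 1) w = F w :=
    hank (m + 1) (cId m) (cId m) (fun _ => rfl) (fun _ => rfl)
  have hFne : ∀ w ∈ I, F w ≠ 0 := by
    intro w hw
    rw [← hFhank w (hIsub hw)]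
    exact hΔ (m + 1) w hw
  -- derivative facts
  have hF : ∀ w : ℝ, 0 < w → HasDerivAt F (G w / w) w := by
    intro w hw
    have h := Hfun_hasDerivAt hsmooth (cId m) (cId m) hw
    rw [bump_sum] at h
    exact h
  have hG : ∀ w : ℝ, 0 < w → HasDerivAt G (K w / w) w := by
    intro w hw
    have h1 : G = Hfun (μ 0) (cHat m) (cId m) := funext (Hfun_symm (μ 0) (cId m) (cHat m))
    rw [h1]
    have h := Hfun_hasDerivAt hsmooth (cHat m) (cId m) hw
    rw [bump_sum] at h
    exact h
  set L : ℝ → ℝ := fun w => Real.log (hankel μ (m + 1) w) with hLdef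
  have key1 : ∀ w ∈ I, HasDerivAt L (G w / (w * F w)) w := by
    intro w hw
    have hw0 : (0 : ℝ) < w := hIsub hw
    have hlog : HasDerivAt (fun t => Real.log (F t)) (G w / w / F w) w :=
      (hF w hw0).log (hFne w hw)
    have heq : L =ᶠ[nhds w] fun t => Real.log (F t) := by
      filter_upwards [isOpen_Ioi.mem_nhds hw0] with t ht
      rw [hLdef]
      simp only
      rw [hFhank t ht]
    have h := hlog.congr_of_eventuallyEq heq
    rw [div_div] at h
    exact h
  have key2 : ∀ w ∈ I, eulerOp L w = G w / F w := by
    intro w hw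
    have hw0 : (0 : ℝ) < w := hIsub hw
    show w * deriv L w = G w / F w
    rw [(key1 w hw).deriv]
    rw [mul_div_assoc']
    exact mul_div_mul_left (G w) (F w) hw0.ne'
  -- the Desnanot–Jacobi step
  set M : Matrix (Fin (m + 2)) (Fin (m + 2)) ℝ :=
    Hmat (μ 0) (fun i : Fin (m + 2) => (i : ℕ)) (fun j : Fin (m + 2) => (j : ℕ)) z with hMdef
  set p : Fin (m + 2) := ⟨m, by omega⟩ with hpdef
  set q : Fin (m + 2) := Fin.last (m + 1) with hqdef
  have hqsucc : ∀ i : Fin (m + 1), ((q.succAbove i : Fin (m + 2)) : ℕ) = (i : ℕ) := by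
    intro i
    have hlt : Fin.castSucc i < q := by
      rw [Fin.lt_def, hqdef]
      simp only [Fin.coe_castSucc, Fin.val_last]
      exact i.isLt
    rw [Fin.succAbove_of_castSucc_lt _ _ hlt]
    simp
  have hpsucc : ∀ i : Fin (m + 1), ((p.succAbove i : Fin (m + 2)) : ℕ) = cHat m i := by
    intro i
    by_cases hi : (i : ℕ) = m
    · have hle : p ≤ Fin.castSucc i := by
        rw [Fin.le_def]
        simp [hpdef, hi]
      rw [Fin.succAbove_of_le_castSucc _ _ hle]
      simp [cHat, hi]
    · have hlt' : (i : ℕ) < m := by have := i.isLt; omega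
      have hlt : Fin.castSucc i < p := by
        rw [Fin.lt_def]
        simpa [hpdef] using hlt'
      rw [Fin.succAbove_of_castSucc_lt _ _ hlt]
      simp [cHat, hi]
  have hsub_qq : (M.submatrix q.succAbove q.succAbove).det = F z := by
    rw [hFdef, Hfun]
    congr 1
    ext i j
    simp only [Matrix.submatrix_apply, hMdef, Hmat, Matrix.of_apply]
    rw [hqsucc i, hqsucc j]
    rfl
  have hsub_pp : (M.submatrix p.succAbove p.succAbove).det = K z := by
    rw [hKdef, Hfun]
    congr 1
    ext i j
    simp only [Matrix.submatrix_apply, hMdef, Hmat, Matrix.of_apply]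
    rw [hpsucc i, hpsucc j]
  have hsub_qp : (M.submatrix q.succAbove p.succAbove).det = G z := by
    rw [hGdef, Hfun]
    congr 1
    ext i j
    simp only [Matrix.submatrix_apply, hMdef, Hmat, Matrix.of_apply]
    rw [hqsucc i, hpsucc j]
    rfl
  have hsub_pq : (M.submatrix p.succAbove q.succAbove).det = G z := by
    rw [hGdef, Hfun_symm, Hfun]
    congr 1
    ext i j
    simp only [Matrix.submatrix_apply, hMdef, Hmat, Matrix.of_apply]
    rw [hpsucc i, hqsucc j]
    rfl
  have hppq : ((p : ℕ) + (q : ℕ)) = 2 * m + 1 := by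
    simp [hpdef, hqdef, Fin.val_last]
    ring
  have hsign_pq : ((-1 : ℝ)) ^ ((p : ℕ) + (q : ℕ)) = -1 := by
    rw [hppq, pow_succ, pow_mul]
    norm_num
  have hadj_qq : M.adjugate q q = F z := by
    rw [adjugate_entry, hsub_qq]
    have h2 : ((q : ℕ) + (q : ℕ)) = 2 * (m + 1) := by
      simp [hqdef, Fin.val_last]
      ring
    rw [h2, pow_mul]
    norm_num
  have hadj_pp : M.adjugate p p = K z := by
    rw [adjugate_entry, hsub_pp]
    have h2 : ((p : ℕ) + (p : ℕ)) = 2 * m := by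
      simp [hpdef]
      ring
    rw [h2, pow_mul]
    norm_num
  have hadj_pq : M.adjugate p q = -(G z) := by
    rw [adjugate_entry, hsub_qp, hsign_pq]
    ring
  have hadj_qp : M.adjugate q p = -(G z) := by
    rw [adjugate_entry, hsub_pq, Nat.add_comm ((q : ℕ)) ((p : ℕ)), hsign_pq]
    ring
  have hMdet : M.det = hankel μ (m + 2) z := by
    rw [hank (m + 2) (fun i : Fin (m + 2) => (i : ℕ)) (fun j : Fin (m + 2) => (j : ℕ))
      (fun _ => rfl) (fun _ => rfl) z hz0]
    rfl
  have hsubdet : (M.submatrix (fun i : Fin m => (⟨(i : ℕ), by omega⟩ : Fin (m + 2)))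
      (fun j : Fin m => (⟨(j : ℕ), by omega⟩ : Fin (m + 2)))).det = hankel μ m z := by
    rw [hank m (fun i : Fin m => (i : ℕ)) (fun j : Fin m => (j : ℕ))
      (fun _ => rfl) (fun _ => rfl) z hz0]
    rfl
  have hdj := dj_fin M
  rw [show (⟨m, by omega⟩ : Fin (m + 2)) = p from rfl, ← hqdef] at hdj
  rw [hadj_qq, hadj_pp, hadj_pq, hadj_qp, hMdet, hsubdet] at hdj
  have halg : K z * F z - G z * G z = hankel μ (m + 2) z * hankel μ m z := by
    have hc : hankel μ (m + 2) z ≠ 0 := hΔ (m + 2) z hz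
    apply mul_left_cancel₀ hc
    calc hankel μ (m + 2) z * (K z * F z - G z * G z)
        = hankel μ (m + 2) z * (K z * F z - -G z * -G z) := by ring
      _ = hankel μ (m + 2) z ^ 2 * hankel μ m z := hdj
      _ = hankel μ (m + 2) z * (hankel μ (m + 2) z * hankel μ m z) := by ring
  -- final computation
  have hiter : eulerOp^[2] L = eulerOp (eulerOp L) := by
    rw [Function.iterate_succ_apply', Function.iterate_one]
  have hdiv : HasDerivAt (fun w => G w / F w)
      ((K z / z * F z - G z * (G z / z)) / F z ^ 2) z :=
    (hG z hz0).div (hF z hz0) (hFne z hz)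
  have hev : eulerOp L =ᶠ[nhds z] fun w => G w / F w := by
    filter_upwards [hI.mem_nhds hz] with w hw
    exact key2 w hw
  have hderiv : deriv (eulerOp L) z = (K z / z * F z - G z * (G z / z)) / F z ^ 2 := by
    rw [Filter.EventuallyEq.deriv_eq hev]
    exact hdiv.deriv
  have hlhs : eulerOp^[2] L z = (K z * F z - G z * G z) / F z ^ 2 := by
    rw [hiter]
    show z * deriv (eulerOp L) z = _
    rw [hderiv]
    have hzne : z ≠ 0 := ne_of_gt hz0
    rw [mul_div_assoc']
    congr 1
    field_simp [hzne]
  have hgoal : eulerOp^[2] L z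
      = hankel μ (m + 1 + 1) z * hankel μ (m + 1 - 1) z / hankel μ (m + 1) z ^ 2 := by
    rw [hlhs, halg]
    simp only [Nat.add_sub_cancel]
    rw [hFhank z hz0]
  exact hgoal
end

section
/- For the Charlier weight ω(k) = z^k/k! on the lattice ℕ with z > 0, the zeroth moment is μ_0(z) = Σ_{k=0}^∞ z^k/k! = e^z, and for every n ≥ 1 the Hankel determinant equals Δ_n(z) = z^{n(n−1)/2} e^{nz} ∏_{k=1}^{n−1} k!. -/
/-- The `k`-th moment of the Charlier weight `ω(j) = z^j / j!` on the lattice `ℕ`: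
`μ_k(z) = Σ_{j=0}^∞ j^k z^j / j!`. -/
noncomputable def charlierMoment (k : ℕ) (z : ℝ) : ℝ :=
  ∑' j : ℕ, (j : ℝ) ^ k * z ^ j / (Nat.factorial j : ℝ)
/-!
Passing from the monomials `t^i` to the monic falling factorials `(t)_k` is a unitriangular
change of basis, so it does not change the Hankel determinant. In the new basis the Gram matrix
of the Charlier weight is explicit: shifting the summation by `l` and expanding `(s + l)_k` by
Chu–Vandermonde gives `∑_t (t)_k (t)_l z^t / t! = e^z ∑_m C(k,m) C(l,m) m! z^(k+l-m)`, that is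
`P D Pᵀ` with `P` the unitriangular Pascal matrix `C(k,m) z^(k-m)` and
`D = diag(m! z^m e^z)`. Hence `Δ_n = ∏_{m<n} m! z^m e^z`.
-/

open Finset Matrix Polynomial
open scoped Nat

theorem Nat.add_descFactorial_eq_sum_antidiagonal (s l k : ℕ) :
    (s + l).descFactorial k =
      ∑ ij ∈ antidiagonal k, k.choose ij.1 * (s.descFactorial ij.1 * l.descFactorial ij.2) := by
  apply Nat.cast_injective (R := ℤ)
  push_cast
  simp only [← descPochhammer_smeval_eq_descFactorial]
  exact Ring.descPochhammer_smeval_add k (Commute.all (s : ℤ) l)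

section MonicChangeOfBasis

variable {n : ℕ} (p : ℕ → ℝ[X])

theorem det_coeff_of_monic (hmonic : ∀ k, (p k).Monic) (hdeg : ∀ k, (p k).natDegree = k) :
    (of fun k i : Fin n => (p k).coeff i).det = 1 := by
  rw [det_of_isLowerTriangular (of fun k i : Fin n => (p k).coeff i)
    fun (k i : Fin n) (hki : k < i) => coeff_eq_zero_of_natDegree_lt ((hdeg k).trans_lt hki)]
  exact prod_eq_one fun k _ => by simpa [hdeg k] using (hmonic k).coeff_natDegree

theorem gram_eq_coeff_mul_hankel_mul_transpose (w : ℕ → ℝ) (hdeg : ∀ k, (p k).natDegree ≤ k)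
    (hw : ∀ m, Summable fun t : ℕ => (t : ℝ) ^ m * w t) :
    (of fun k l : Fin n => ∑' t : ℕ, (p k).eval (t : ℝ) * (p l).eval (t : ℝ) * w t) =
      (of fun k i : Fin n => (p k).coeff i) *
        (of fun i j : Fin n => ∑' t : ℕ, (t : ℝ) ^ (i + j : ℕ) * w t) *
        (of fun k i : Fin n => (p k).coeff i)ᵀ := by
  have heval (k : Fin n) (x : ℝ) : (p k).eval x = ∑ i : Fin n, (p k).coeff i * x ^ (i : ℕ) := by
    rw [eval_eq_sum_range' ((hdeg k).trans_lt k.isLt),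
      Fin.sum_univ_eq_sum_range (fun i => (p k).coeff i * x ^ i)]
  ext k l
  have hterm (t : ℕ) : (p k).eval (t : ℝ) * (p l).eval (t : ℝ) * w t =
      ∑ j : Fin n, ∑ i : Fin n, (p k).coeff i * ((t : ℝ) ^ (i + j : ℕ) * w t) * (p l).coeff j := by
    simp only [heval, sum_mul, mul_sum]
    refine sum_congr rfl fun j _ => sum_congr rfl fun i _ => ?_
    ring
  have hsum (i j : Fin n) : Summable fun t : ℕ =>
      (p k).coeff i * ((t : ℝ) ^ (i + j : ℕ) * w t) * (p l).coeff j :=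
    ((hw _).mul_left _).mul_right _
  simp only [of_apply, mul_apply, transpose_apply, sum_mul]
  rw [tsum_congr hterm, Summable.tsum_finsetSum fun j _ => summable_sum fun i _ => hsum i j]
  refine sum_congr rfl fun j _ => ?_
  rw [Summable.tsum_finsetSum fun i _ => hsum i j]
  exact sum_congr rfl fun i _ => by rw [tsum_mul_right, tsum_mul_left]

theorem det_gram_eq_det_hankel (w : ℕ → ℝ) (hmonic : ∀ k, (p k).Monic)
    (hdeg : ∀ k, (p k).natDegree = k) (hw : ∀ m, Summable fun t : ℕ => (t : ℝ) ^ m * w t) :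
    (of fun k l : Fin n => ∑' t : ℕ, (p k).eval (t : ℝ) * (p l).eval (t : ℝ) * w t).det =
      (of fun i j : Fin n => ∑' t : ℕ, (t : ℝ) ^ (i + j : ℕ) * w t).det := by
  rw [gram_eq_coeff_mul_hankel_mul_transpose p w (fun k => (hdeg k).le) hw, det_mul, det_mul,
    det_transpose, det_coeff_of_monic p hmonic hdeg, one_mul, mul_one]

end MonicChangeOfBasis

theorem Real.hasSum_pow_div_factorial (z : ℝ) : HasSum (fun t : ℕ => z ^ t / t !) (Real.exp z) :=
  Real.exp_eq_exp_ℝ ▸ NormedSpace.expSeries_div_hasSum_exp z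

-- `t ^ m ≤ m! e^t` dominates the series by `m!` times the exponential series at `e |z|`.
theorem summable_pow_mul_pow_div_factorial (m : ℕ) (z : ℝ) :
    Summable fun t : ℕ => (t : ℝ) ^ m * (z ^ t / t !) := by
  refine .of_norm_bounded
    ((Real.summable_pow_div_factorial (Real.exp 1 * |z|)).mul_left (m ! : ℝ)) fun t => ?_
  have hpow : (t : ℝ) ^ m ≤ m ! * Real.exp 1 ^ t := by
    rw [Real.exp_one_pow, ← div_le_iff₀' (by positivity)]
    exact Real.pow_div_factorial_le_exp _ t.cast_nonneg m
  rw [norm_mul, norm_div, norm_pow, norm_pow, Real.norm_natCast, Real.norm_natCast,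
    Real.norm_eq_abs, mul_pow, ← mul_div_assoc, ← mul_div_assoc, ← mul_assoc]
  gcongr

theorem descFactorial_mul_pow_div_factorial_add (s k : ℕ) (z : ℝ) :
    ((s + k).descFactorial k : ℝ) * (z ^ (s + k) / (s + k)!) = z ^ k * (z ^ s / s !) := by
  have hfac : ((s + k)! : ℝ) = s ! * (s + k).descFactorial k := by
    rw [← Nat.factorial_mul_descFactorial (Nat.le_add_left k s), Nat.add_sub_cancel]
    push_cast
    ring
  have hdesc : ((s + k).descFactorial k : ℝ) ≠ 0 := by
    exact_mod_cast (Nat.descFactorial_pos.2 (Nat.le_add_left k s)).ne'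
  rw [hfac, pow_add]
  field_simp

theorem hasSum_descFactorial_mul_pow_div_factorial (k : ℕ) (z : ℝ) :
    HasSum (fun t : ℕ => (t.descFactorial k : ℝ) * (z ^ t / t !)) (z ^ k * Real.exp z) := by
  rw [← hasSum_nat_add_iff' k]
  have hinit : ∑ t ∈ range k, (t.descFactorial k : ℝ) * (z ^ t / t !) = 0 :=
    sum_eq_zero fun t ht => by simp [Nat.descFactorial_eq_zero_iff_lt.2 (mem_range.1 ht)]
  simp only [hinit, sub_zero, descFactorial_mul_pow_div_factorial_add]
  exact (Real.hasSum_pow_div_factorial z).mul_left _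

theorem hasSum_descFactorial_mul_descFactorial_mul_pow_div_factorial (k l : ℕ) (z : ℝ) :
    HasSum (fun t : ℕ => (t.descFactorial k : ℝ) * t.descFactorial l * (z ^ t / t !))
      (∑ ij ∈ antidiagonal k, (k.choose ij.1 : ℝ) * l.descFactorial ij.2 * z ^ (ij.1 + l) *
        Real.exp z) := by
  rw [← hasSum_nat_add_iff' l]
  have hinit : ∑ t ∈ range l, (t.descFactorial k : ℝ) * t.descFactorial l * (z ^ t / t !) = 0 :=
    sum_eq_zero fun t ht => by simp [Nat.descFactorial_eq_zero_iff_lt.2 (mem_range.1 ht)]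
  have hterm (s : ℕ) : ((s + l).descFactorial k : ℝ) * (s + l).descFactorial l *
      (z ^ (s + l) / (s + l)!) = ∑ ij ∈ antidiagonal k, (k.choose ij.1 : ℝ) *
        l.descFactorial ij.2 * z ^ l * (s.descFactorial ij.1 * (z ^ s / s !)) := by
    rw [mul_assoc, descFactorial_mul_pow_div_factorial_add,
      Nat.add_descFactorial_eq_sum_antidiagonal]
    push_cast
    rw [sum_mul]
    exact sum_congr rfl fun ij _ => by ring
  simp only [hinit, sub_zero, hterm]
  refine hasSum_sum fun ij _ => ?_
  rw [pow_add, mul_comm (z ^ ij.1), ← mul_assoc, mul_assoc _ (z ^ ij.1)]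
  exact (hasSum_descFactorial_mul_pow_div_factorial ij.1 z).mul_left _

def pascalMatrix (n : ℕ) (z : ℝ) : Matrix (Fin n) (Fin n) ℝ :=
  of fun k m => ((k : ℕ).choose m : ℝ) * z ^ ((k : ℕ) - m)

theorem det_pascalMatrix (n : ℕ) (z : ℝ) : (pascalMatrix n z).det = 1 := by
  rw [det_of_isLowerTriangular (pascalMatrix n z) fun (k m : Fin n) (hkm : k < m) => by
    simp [pascalMatrix, Nat.choose_eq_zero_of_lt (Fin.lt_def.mp hkm)]]
  simp [pascalMatrix]

theorem factorialGram_eq_pascal_mul_diagonal_mul_transpose (n : ℕ) (z : ℝ) :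
    (of fun k l : Fin n =>
      ∑' t : ℕ, (t.descFactorial k : ℝ) * t.descFactorial l * (z ^ t / t !)) =
      pascalMatrix n z * diagonal (fun m : Fin n => ((m : ℕ)! : ℝ) * z ^ (m : ℕ) * Real.exp z) *
        (pascalMatrix n z)ᵀ := by
  ext k l
  rw [of_apply, (hasSum_descFactorial_mul_descFactorial_mul_pow_div_factorial k l z).tsum_eq,
    ← Nat.sum_antidiagonal_swap]
  simp only [Prod.fst_swap, Prod.snd_swap]
  rw [Nat.sum_antidiagonal_eq_sum_range_succ
      (fun m i => ((k : ℕ).choose i : ℝ) * (l : ℕ).descFactorial m * z ^ (i + l) * Real.exp z)]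
  simp only [mul_apply (M := _ * diagonal _), mul_diagonal, transpose_apply, pascalMatrix,
    of_apply]
  rw [Fin.sum_univ_eq_sum_range (fun m => ((k : ℕ).choose m : ℝ) * z ^ ((k : ℕ) - m) *
    (m ! * z ^ m * Real.exp z) * ((l : ℕ).choose m * z ^ ((l : ℕ) - m))) n]
  rw [← sum_subset (range_subset_range.2 k.isLt) fun m _ hm => by
    simp [Nat.choose_eq_zero_of_lt (not_lt.mp (mem_range.not.mp hm))]]
  refine sum_congr rfl fun m hm => ?_
  rw [Nat.choose_symm (Nat.lt_succ_iff.mp (mem_range.mp hm)),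
    Nat.descFactorial_eq_factorial_mul_choose]
  push_cast
  rcases le_or_gt m l with hml | hlm
  · obtain ⟨d, hd⟩ := Nat.exists_eq_add_of_le hml
    rw [hd, Nat.add_sub_cancel_left, pow_add, pow_add]
    ring
  · simp [Nat.choose_eq_zero_of_lt hlm]

theorem prod_factorial_mul_pow_mul_exp (n : ℕ) (z : ℝ) :
    ∏ m : Fin n, ((m : ℕ)! : ℝ) * z ^ (m : ℕ) * Real.exp z =
      z ^ (n * (n - 1) / 2) * Real.exp (n * z) * ∏ k ∈ Icc 1 (n - 1), (k ! : ℝ) := by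
  rw [prod_mul_distrib, prod_mul_distrib, prod_const, card_univ, Fintype.card_fin,
    ← Real.exp_nat_mul, prod_pow_eq_pow_sum,
    Fin.prod_univ_eq_prod_range (fun m => (m ! : ℝ)), Fin.sum_univ_eq_sum_range (fun i => i) n,
    sum_range_id]
  have hfac : ∏ m ∈ range n, (m ! : ℝ) = ∏ k ∈ Icc 1 (n - 1), (k ! : ℝ) := by
    refine (prod_subset (fun k hk => ?_) fun k hk hk' => ?_).symm
    · simp only [mem_Icc, mem_range] at hk ⊢
      omega
    · obtain rfl : k = 0 := by simp only [mem_Icc, mem_range] at hk hk'; omega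
      simp
  rw [hfac]
  ring

theorem charlier_moment_and_hankel_general (z : ℝ) :
    charlierMoment 0 z = Real.exp z ∧
    ∀ n : ℕ, 1 ≤ n →
      hankel charlierMoment n z
        = z ^ (n * (n - 1) / 2) * Real.exp ((n : ℝ) * z)
            * ∏ k ∈ Finset.Icc 1 (n - 1), (Nat.factorial k : ℝ) := by
  refine ⟨by simpa [charlierMoment] using (Real.hasSum_pow_div_factorial z).tsum_eq, fun n _ => ?_⟩
  calc hankel charlierMoment n z
      = (of fun i j : Fin n => ∑' t : ℕ, (t : ℝ) ^ (i + j : ℕ) * (z ^ t / t !)).det := by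
        simp only [hankel, charlierMoment, mul_div_assoc]
    _ = (of fun k l : Fin n => ∑' t : ℕ,
          (descPochhammer ℝ k).eval (t : ℝ) * (descPochhammer ℝ l).eval (t : ℝ) *
            (z ^ t / t !)).det :=
        (det_gram_eq_det_hankel _ _ (fun k => monic_descPochhammer ℝ k)
          (fun k => descPochhammer_natDegree ℝ k) (summable_pow_mul_pow_div_factorial · z)).symm
    _ = ∏ m : Fin n, ((m : ℕ)! : ℝ) * z ^ (m : ℕ) * Real.exp z := by
        simp only [descPochhammer_eval_eq_descFactorial,
          factorialGram_eq_pascal_mul_diagonal_mul_transpose, det_mul, det_transpose,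
          det_pascalMatrix, det_diagonal, one_mul, mul_one]
    _ = _ := prod_factorial_mul_pow_mul_exp n z

/-- For the Charlier weight `ω(k) = z^k/k!` with `z > 0`, the zeroth moment is
`μ_0(z) = e^z` and for every `n ≥ 1` the Hankel determinant is
`Δ_n(z) = z^{n(n−1)/2} e^{nz} ∏_{k=1}^{n−1} k!`. -/
theorem charlier_moment_and_hankel (z : ℝ) (hz : 0 < z) :
    charlierMoment 0 z = Real.exp z ∧
    ∀ n : ℕ, 1 ≤ n →
      hankel charlierMoment n z
        = z ^ (n * (n - 1) / 2) * Real.exp ((n : ℝ) * z)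
            * ∏ k ∈ Finset.Icc 1 (n - 1), (Nat.factorial k : ℝ) :=
  charlier_moment_and_hankel_general z
end

section
/- Let a, b, θ ∈ ℝ and let q, p be smooth functions on (0,∞) satisfying the Hamiltonian system z·q′ = 2q(q−1)²p − (b+θ)q² + (2b+θ−z)q − b and z·p′ = −(3q−1)(q−1)p² + 2(b+θ)qp − (2b+θ−z)p + (a² − (b+θ)²)/4. Define H(z) = q(q−1)²p² − {(b+θ)q² − (2b+θ−z)q + b}p − (a² − (b+θ)²)q/4 and σ(z) = H(z) + (2b+θ)z/4 − (2b+θ)²/8. Then σ satisfies the Painlevé V σ-equation (z·σ″)² − {2(σ′)² − z·σ′ + σ}² + 4·(σ′+κ_1)(σ′+κ_2)(σ′+κ_3)(σ′+κ_4) = 0 with κ_1 = θ/4 + a/2, κ_2 = θ/4 − a/2, κ_3 = −θ/4 − b/2, κ_4 = −θ/4 + b/2. -/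
/-- Let `q, p` be smooth functions on `(0,∞)` satisfying the Hamiltonian system for
Painlevé V: `z q′ = 2q(q−1)²p − (b+θ)q² + (2b+θ−z)q − b` and
`z p′ = −(3q−1)(q−1)p² + 2(b+θ)qp − (2b+θ−z)p + (a² − (b+θ)²)/4`. With
`H = q(q−1)²p² − {(b+θ)q² − (2b+θ−z)q + b}p − (a² − (b+θ)²)q/4` and
`σ(z) = H(z) + (2b+θ)z/4 − (2b+θ)²/8`, the function `σ` satisfies the Painlevé V σ-equation
`(z σ″)² − {2(σ′)² − z σ′ + σ}² + 4(σ′+κ_1)(σ′+κ_2)(σ′+κ_3)(σ′+κ_4) = 0` with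
`κ_1 = θ/4 + a/2`, `κ_2 = θ/4 − a/2`, `κ_3 = −θ/4 − b/2`, `κ_4 = −θ/4 + b/2`. -/
theorem hamiltonianPV_to_sigma_equation (a b θ : ℝ) (q p : ℝ → ℝ)
    (hq : ContDiffOn ℝ (⊤ : ℕ∞) q (Set.Ioi 0)) (hp : ContDiffOn ℝ (⊤ : ℕ∞) p (Set.Ioi 0))
    (hsys1 : ∀ z > (0 : ℝ),
      z * deriv q z
        = 2 * q z * (q z - 1) ^ 2 * p z - (b + θ) * (q z) ^ 2
          + (2 * b + θ - z) * q z - b)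
    (hsys2 : ∀ z > (0 : ℝ),
      z * deriv p z
        = -(3 * q z - 1) * (q z - 1) * (p z) ^ 2 + 2 * (b + θ) * q z * p z
          - (2 * b + θ - z) * p z + (a ^ 2 - (b + θ) ^ 2) / 4) :
    let H : ℝ → ℝ := fun z =>
      q z * (q z - 1) ^ 2 * (p z) ^ 2
        - ((b + θ) * (q z) ^ 2 - (2 * b + θ - z) * q z + b) * p z
        - (a ^ 2 - (b + θ) ^ 2) * q z / 4
    let σ : ℝ → ℝ := fun z => H z + (2 * b + θ) * z / 4 - (2 * b + θ) ^ 2 / 8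
    ∀ z > (0 : ℝ),
      (z * deriv (deriv σ) z) ^ 2
        - (2 * (deriv σ z) ^ 2 - z * deriv σ z + σ z) ^ 2
        + 4 * (deriv σ z + (θ / 4 + a / 2)) * (deriv σ z + (θ / 4 - a / 2))
            * (deriv σ z + (-(θ / 4) - b / 2)) * (deriv σ z + (-(θ / 4) + b / 2))
      = 0 := by
  intro H σ z hz
  have hz0 : (0:ℝ) < z := hz
  have hqd : ∀ x ∈ Set.Ioi (0:ℝ), HasDerivAt q (deriv q x) x := fun x hx =>
    ((hq.differentiableOn (by simp)).differentiableAt (Ioi_mem_nhds hx)).hasDerivAt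
  have hpd : ∀ x ∈ Set.Ioi (0:ℝ), HasDerivAt p (deriv p x) x := fun x hx =>
    ((hp.differentiableOn (by simp)).differentiableAt (Ioi_mem_nhds hx)).hasDerivAt
  have hval : ∀ x ∈ Set.Ioi (0:ℝ), deriv σ x = -(q x * p x) + (2*b+θ)/4 := by
    intro x hx
    have hx0 : (0:ℝ) < x := hx
    have hqx := hqd x hx
    have hpx := hpd x hx
    have hq' : deriv q x
        = (2*q x*(q x-1)^2*p x - (b+θ)*q x^2 + (2*b+θ-x)*q x - b)/x := by
      rw [eq_div_iff hx0.ne']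
      linear_combination hsys1 x hx0
    have hp' : deriv p x
        = (-(3*q x-1)*(q x-1)*p x^2 + 2*(b+θ)*q x*p x - (2*b+θ-x)*p x
            + (a^2-(b+θ)^2)/4)/x := by
      rw [eq_div_iff hx0.ne']
      linear_combination hsys2 x hx0
    have hbig :=
      (((((hqx.mul ((hqx.sub_const 1).pow 2)).mul (hpx.pow 2)).sub
        (((((hqx.pow 2).const_mul (b+θ)).sub
          (((hasDerivAt_id x).const_sub (2*b+θ)).mul hqx)).add_const b).mul hpx)).sub
        ((hqx.const_mul (a^2-(b+θ)^2)).div_const 4)).add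
        (((hasDerivAt_id x).const_mul (2*b+θ)).div_const 4)).sub_const ((2*b+θ)^2/8)
    have h2 : deriv σ x = _ := hbig.deriv
    rw [h2, hq', hp']
    simp only [Pi.mul_apply, Pi.pow_apply, Pi.sub_apply, Pi.add_apply, id]
    push_cast
    field_simp
    ring
  have hs1 : deriv σ z = -(q z * p z) + (2*b+θ)/4 := hval z hz
  have hqz := hqd z hz
  have hpz := hpd z hz
  have heq : deriv σ =ᶠ[nhds z] (fun t => -(q t * p t) + (2*b+θ)/4) :=
    Filter.eventuallyEq_of_mem (Ioi_mem_nhds hz0) hval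
  have hdd : deriv (deriv σ) z = -(deriv q z * p z + q z * deriv p z) := by
    rw [heq.deriv_eq]
    exact (((hqz.mul hpz).neg).add_const ((2*b+θ)/4)).deriv
  have hss : z * deriv (deriv σ) z
      = -((2*q z*(q z-1)^2*p z - (b+θ)*q z^2 + (2*b+θ-z)*q z - b)*p z
          + q z*(-(3*q z-1)*(q z-1)*p z^2 + 2*(b+θ)*q z*p z - (2*b+θ-z)*p z
            + (a^2-(b+θ)^2)/4)) := by
    rw [hdd]
    linear_combination (-(p z)) * hsys1 z hz0 + (-(q z)) * hsys2 z hz0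
  have hσz : σ z = q z*(q z-1)^2*p z^2 - ((b+θ)*q z^2 - (2*b+θ-z)*q z + b)*p z
      - (a^2-(b+θ)^2)*q z/4 + (2*b+θ)*z/4 - (2*b+θ)^2/8 := rfl
  rw [hss, hs1, hσz]
  ring
end
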